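/- arXiv:2504.12302 — 3 statements merged into one kernel-verified Lean document; each statement's English description precedes it below -/
import Mathlib

section
/- Let ħ ≥ 3 and N ≥ 1 be integers, and let p, e : ℕ → ℕ be functions such that for all x ≥ 1: 2^{p(x)} + x + N + 1 ≤ 2^{e(x)} and e(x) ≤ 𝔱(x, N). Let n ≥ N be an integer with n ≥ 1, and define M₁ = 2^{p(n)} + n − 1 and M_{k+1} = 2^{p(F_ħ(M_k))} + F_ħ(M_k) − 1 for k ≥ 1. Then for every k ∈ {1, …, n} we have F_ħ(M_k) ≤ F_ħ^{k+1}(n); in particular F_ħ(M_n) ≤ F_ħ^{n+1}(n) = F_{ħ+1}(n). -/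
/-- The tower function: `𝔱(x, 0) = x`, `𝔱(x, y+1) = 2 ^ 𝔱(x, y)`. -/
def tower : ℕ → ℕ → ℕ
  | x, 0 => x
  | x, y + 1 => 2 ^ tower x y

/-- `Fgrow d` is the fast-growing function `F_{d+3}`:
`F₃(x) = 𝔱(x, x+1)` and `F_{d+1}(x) = F_d^[x+1](x)`. -/
def Fgrow : ℕ → ℕ → ℕ
  | 0 => fun x => tower x (x + 1)
  | d + 1 => fun x => (Fgrow d)^[x + 1] x

/-- The fast-growing function `F_d` (for `d ≥ 3`). -/
def Ffun (d : ℕ) : ℕ → ℕ := Fgrow (d - 3)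

lemma tower_le_succ (x y : ℕ) : tower x y ≤ tower x (y + 1) :=
  le_of_lt Nat.lt_two_pow_self

lemma tower_mono_right (x : ℕ) : Monotone (tower x) :=
  monotone_nat_of_le_succ (tower_le_succ x)

lemma tower_mono_left {x x' : ℕ} (h : x ≤ x') (y : ℕ) : tower x y ≤ tower x' y := by
  induction y with
  | zero => exact h
  | succ y ih => exact Nat.pow_le_pow_right (by norm_num) ih

lemma tower_add (x a b : ℕ) : tower (tower x a) b = tower x (a + b) := by
  induction b with
  | zero => rfl
  | succ b ih =>
    show (2:ℕ) ^ tower (tower x a) b = tower x (a + (b + 1))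
    rw [ih]; rfl

lemma le_tower (x y : ℕ) : x ≤ tower x y := tower_mono_right x (Nat.zero_le y)

lemma iter_le {f : ℕ → ℕ} (hf : ∀ y, y ≤ f y) : ∀ k x, x ≤ f^[k] x
  | 0, _ => le_refl _
  | k + 1, x => (hf x).trans (by rw [Function.iterate_succ_apply]; exact iter_le hf k (f x))

lemma iter_mono {f : ℕ → ℕ} (hm : Monotone f) (hf : ∀ y, y ≤ f y)
    {i j x y : ℕ} (hij : i ≤ j) (hxy : x ≤ y) : f^[i] x ≤ f^[j] y := by
  obtain ⟨c, rfl⟩ := Nat.exists_eq_add_of_le hij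
  calc f^[i] x ≤ f^[i] y := hm.iterate i hxy
    _ ≤ f^[i + c] y := by
        rw [add_comm, Function.iterate_add_apply]
        exact iter_le hf c _

lemma le_Fgrow (d : ℕ) : ∀ x, x ≤ Fgrow d x := by
  induction d with
  | zero => exact fun x => le_tower x (x + 1)
  | succ d ih => exact fun x => iter_le ih (x + 1) x

lemma Fgrow_mono (d : ℕ) : Monotone (Fgrow d) := by
  induction d with
  | zero =>
    intro x y h
    exact (tower_mono_left h _).trans (tower_mono_right y (by omega))
  | succ d ih =>
    intro x y h
    exact iter_mono ih (le_Fgrow d) (by omega) h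

lemma Fgrow_zero_le (d x : ℕ) : Fgrow 0 x ≤ Fgrow d x := by
  induction d with
  | zero => exact le_refl _
  | succ d ih =>
    refine ih.trans ?_
    show Fgrow d x ≤ (Fgrow d)^[x + 1] x
    rw [Function.iterate_succ_apply']
    exact Fgrow_mono d (iter_le (le_Fgrow d) x x)

lemma two_pow_le_Fgrow (d x : ℕ) : 2 ^ x ≤ Fgrow d x := by
  have h1 : (2 : ℕ) ^ x = tower x 1 := rfl
  calc (2:ℕ) ^ x = tower x 1 := rfl
    _ ≤ tower x (x + 1) := tower_mono_right x (by omega)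
    _ = Fgrow 0 x := rfl
    _ ≤ Fgrow d x := Fgrow_zero_le d x

lemma tower_le_iter (d w : ℕ) : ∀ b, tower w b ≤ (Fgrow d)^[b] w := by
  intro b
  induction b with
  | zero => exact le_refl _
  | succ b ih =>
    calc tower w (b + 1) = 2 ^ tower w b := rfl
      _ ≤ 2 ^ ((Fgrow d)^[b] w) := Nat.pow_le_pow_right (by norm_num) ih
      _ ≤ Fgrow d ((Fgrow d)^[b] w) := two_pow_le_Fgrow d _
      _ = (Fgrow d)^[b + 1] w := (Function.iterate_succ_apply' _ _ _).symm

lemma keyB (N : ℕ) : ∀ (d M z : ℕ), M + N + 1 ≤ z →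
    tower (Fgrow d M) (N + 1) ≤ Fgrow d z := by
  intro d
  induction d with
  | zero =>
    intro M z h
    show tower (tower M (M + 1)) (N + 1) ≤ tower z (z + 1)
    rw [tower_add]
    exact (tower_mono_left (by omega) _).trans (tower_mono_right z (by omega))
  | succ d ih =>
    intro M z h
    show tower ((Fgrow d)^[M + 1] M) (N + 1) ≤ (Fgrow d)^[z + 1] z
    calc tower ((Fgrow d)^[M + 1] M) (N + 1)
        ≤ (Fgrow d)^[N + 1] ((Fgrow d)^[M + 1] M) := tower_le_iter d _ _
      _ = (Fgrow d)^[(N + 1) + (M + 1)] M := (Function.iterate_add_apply _ _ _ _).symm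
      _ ≤ (Fgrow d)^[z + 1] z := iter_mono (Fgrow_mono d) (le_Fgrow d) (by omega) (by omega)

/-- Quantitative core of the bound on maximum proliferation trees: with
`M₁ = 2^{p(n)} + n - 1` and `M_{k+1} = 2^{p(F_hbar(M_k))} + F_hbar(M_k) - 1`, one has
`F_hbar(M_k) ≤ F_hbar^{k+1}(n)` for all `k ∈ {1, …, n}`; in particular
`F_hbar(M_n) ≤ F_hbar^{n+1}(n) = F_{hbar+1}(n)`. -/
theorem proliferation_bound (hbar N : ℕ) (h3 : 3 ≤ hbar) (hN : 1 ≤ N)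
    (p e : ℕ → ℕ)
    (hpe : ∀ x, 1 ≤ x → 2 ^ p x + x + N + 1 ≤ 2 ^ e x)
    (he : ∀ x, 1 ≤ x → e x ≤ tower x N)
    (n : ℕ) (hn1 : 1 ≤ n) (hnN : N ≤ n)
    (M : ℕ → ℕ)
    (hM1 : M 1 = 2 ^ p n + n - 1)
    (hMs : ∀ k, 1 ≤ k → M (k + 1) = 2 ^ p (Ffun hbar (M k)) + Ffun hbar (M k) - 1) :
    (∀ k, 1 ≤ k → k ≤ n → Ffun hbar (M k) ≤ (Ffun hbar)^[k + 1] n) ∧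
    Ffun hbar (M n) ≤ (Ffun hbar)^[n + 1] n ∧ (Ffun hbar)^[n + 1] n = Ffun (hbar + 1) n := by
  set d := hbar - 3 with hd
  have hF : Ffun hbar = Fgrow d := rfl
  -- bound 2^(e x) by tower x (N+1)
  have hE : ∀ x, 1 ≤ x → (2:ℕ) ^ e x ≤ tower x (N + 1) := by
    intro x hx
    calc (2:ℕ) ^ e x ≤ 2 ^ tower x N := Nat.pow_le_pow_right (by norm_num) (he x hx)
      _ = tower x (N + 1) := rfl
  -- main invariant
  have main : ∀ k, 1 ≤ k → n ≤ M k ∧ M k + N + 1 ≤ (Fgrow d)^[k] n := by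
    intro k hk
    induction k with
    | zero => omega
    | succ k ih =>
      rcases Nat.eq_or_lt_of_le hk with h1 | h1
      · -- k + 1 = 1
        have hk0 : k = 0 := by omega
        subst hk0
        simp only [Nat.zero_add]
        have hpn : 1 ≤ 2 ^ p n := Nat.one_le_two_pow
        constructor
        · omega
        · have h1 : M 1 + N + 1 = 2 ^ p n + n + N := by omega
          rw [Function.iterate_one, h1]
          calc 2 ^ p n + n + N ≤ 2 ^ e n := by have := hpe n hn1; omega
            _ ≤ tower n (N + 1) := hE n hn1
            _ ≤ tower n (n + 1) := tower_mono_right n (by omega)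
            _ = Fgrow 0 n := rfl
            _ ≤ Fgrow d n := Fgrow_zero_le d n
      · -- k ≥ 1
        have hk1 : 1 ≤ k := by omega
        obtain ⟨hnk, hinv⟩ := ih hk1
        set y := Ffun hbar (M k) with hy
        have hyM : M k ≤ y := le_Fgrow d (M k)
        have hy1 : 1 ≤ y := by omega
        have hMk1 : M (k + 1) = 2 ^ p y + y - 1 := hMs k hk1
        have hpy : 1 ≤ 2 ^ p y := Nat.one_le_two_pow
        constructor
        · omega
        · have h1 : M (k + 1) + N + 1 = 2 ^ p y + y + N := by omega
          rw [Function.iterate_succ_apply', h1]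
          calc 2 ^ p y + y + N ≤ 2 ^ e y := by have := hpe y hy1; omega
            _ ≤ tower y (N + 1) := hE y hy1
            _ = tower (Fgrow d (M k)) (N + 1) := rfl
            _ ≤ Fgrow d ((Fgrow d)^[k] n) := keyB N d (M k) _ hinv
  have part1 : ∀ k, 1 ≤ k → k ≤ n → Ffun hbar (M k) ≤ (Ffun hbar)^[k + 1] n := by
    intro k hk _
    obtain ⟨_, hinv⟩ := main k hk
    have : M k ≤ (Fgrow d)^[k] n := by omega
    calc Ffun hbar (M k) = Fgrow d (M k) := rfl
      _ ≤ Fgrow d ((Fgrow d)^[k] n) := Fgrow_mono d this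
      _ = (Fgrow d)^[k + 1] n := (Function.iterate_succ_apply' _ _ _).symm
  refine ⟨part1, part1 n hn1 le_rfl, ?_⟩
  show (Fgrow d)^[n + 1] n = Fgrow (hbar + 1 - 3) n
  rw [show hbar + 1 - 3 = d + 1 from by omega]
  rfl
end

section
/- Let D ≥ 1, let u', v' ∈ ℤ^D be linearly independent over ℚ, and let c ∈ ℤ^D be a nonzero vector lying in the ℚ-linear span of {u', v'}. Then there exist nonzero vectors u, v ∈ ℤ^D, each lying both in the ℚ-linear span of {u', v'} and in the orthant Z_c, and nonnegative rationals ℓ, ℓ', such that c = ℓ·u + ℓ'·v and ‖u‖₁, ‖v‖₁ ≤ (1 + (D+2)·max(1, ‖u'‖∞, ‖v'‖∞))^D. -/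
/-- `MemOrthant v w` : `w` lies in the orthant `Z_v`. -/
def MemOrthant {D : ℕ} (v w : Fin D → ℤ) : Prop :=
  ∀ i, (0 ≤ v i → 0 ≤ w i) ∧ (v i < 0 → w i ≤ 0)

def pdot (x y : ℚ × ℚ) : ℚ := x.1 * y.1 + x.2 * y.2
def pcross (x y : ℚ × ℚ) : ℚ := x.1 * y.2 - x.2 * y.1
def prot (x : ℚ × ℚ) : ℚ × ℚ := (-x.2, x.1)

lemma geom {D : ℕ} (n : Fin D → ℚ × ℚ) (p : ℚ × ℚ) (hp : p ≠ 0)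
    (hfeas : ∀ i, 0 ≤ pdot (n i) p)
    (hspan : ∀ x : ℚ × ℚ, (∀ i, pdot (n i) x = 0) → x = 0) :
    ∃ q r : ℚ × ℚ,
      (∃ i, q = prot (n i) ∨ q = -prot (n i)) ∧
      (∃ i, r = prot (n i) ∨ r = -prot (n i)) ∧
      q ≠ 0 ∧ r ≠ 0 ∧
      (∀ i, 0 ≤ pdot (n i) q) ∧ (∀ i, 0 ≤ pdot (n i) r) ∧
      ∃ l l' : ℚ, 0 ≤ l ∧ 0 ≤ l' ∧ p = l • q + l' • r := by
  have hp' : p.1 ≠ 0 ∨ p.2 ≠ 0 := by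
    by_contra h
    push_neg at h
    exact hp (Prod.ext h.1 h.2)
  have hdotpp : 0 < pdot p p := by
    unfold pdot
    rcases hp' with h | h <;>
      nlinarith [mul_self_nonneg p.1, mul_self_nonneg p.2, mul_self_pos.mpr h]
  by_cases hcase : ∃ j, n j ≠ 0 ∧ pdot (n j) p = 0
  · -- p on a boundary line
    obtain ⟨j, hnj, hdj⟩ := hcase
    have hrotne : prot (n j) ≠ 0 := by
      intro h
      apply hnj
      have h1 := congrArg Prod.fst h
      have h2 := congrArg Prod.snd h
      simp [prot] at h1 h2
      exact Prod.ext h2 h1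
    have hex : ∃ μ : ℚ, p = μ • prot (n j) := by
      by_cases h1 : (n j).1 ≠ 0
      · refine ⟨p.2 / (n j).1, Prod.ext ?_ ?_⟩ <;> simp [prot, pdot] at hdj ⊢ <;> field_simp <;> linarith [hdj]
      · push_neg at h1
        have h2 : (n j).2 ≠ 0 := by
          intro h2; exact hnj (Prod.ext h1 h2)
        have hp2 : p.2 = 0 := by
          unfold pdot at hdj; rw [h1] at hdj; simp at hdj
          rcases hdj with h | h
          · exact absurd h h2
          · exact h
        refine ⟨-p.1 / (n j).2, Prod.ext ?_ ?_⟩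
        · simp [prot]; field_simp
        · simp [prot, h1, hp2]
    obtain ⟨μ, hμ⟩ := hex
    have hμne : μ ≠ 0 := by
      intro h; rw [h, zero_smul] at hμ; exact hp hμ
    have hdlin : ∀ i, pdot (n i) p = μ * pdot (n i) (prot (n j)) := by
      intro i
      rw [hμ]
      simp [pdot, prot]
      ring
    rcases lt_or_gt_of_ne hμne with hneg | hpos
    · refine ⟨-prot (n j), -prot (n j), ⟨j, Or.inr rfl⟩, ⟨j, Or.inr rfl⟩, neg_ne_zero.mpr hrotne,
        neg_ne_zero.mpr hrotne, ?_, ?_, -μ, 0, by linarith, le_refl 0, ?_⟩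
      · intro i
        have := hfeas i
        rw [hdlin i] at this
        have : 0 ≤ pdot (n i) (-prot (n j)) := by
          have hd : pdot (n i) (-prot (n j)) = -pdot (n i) (prot (n j)) := by
            simp [pdot]; ring
          rw [hd]
          nlinarith
        exact this
      · intro i
        have := hfeas i
        rw [hdlin i] at this
        have hd : pdot (n i) (-prot (n j)) = -pdot (n i) (prot (n j)) := by
          simp [pdot]; ring
        rw [hd]; nlinarith
      · rw [hμ]; ext <;> simp <;> ring
    · refine ⟨prot (n j), prot (n j), ⟨j, Or.inl rfl⟩, ⟨j, Or.inl rfl⟩, hrotne, hrotne,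
        ?_, ?_, μ, 0, le_of_lt hpos, le_refl 0, ?_⟩
      · intro i
        have := hfeas i
        rw [hdlin i] at this
        nlinarith
      · intro i
        have := hfeas i
        rw [hdlin i] at this
        nlinarith
      · rw [hμ]; ext <;> simp
  · -- strict interior case
    push_neg at hcase
    have hpos : ∀ j, n j ≠ 0 → 0 < pdot (n j) p := fun j hj =>
      lt_of_le_of_ne (hfeas j) (Ne.symm (hcase j hj))
    have hjex : ∃ j, n j ≠ 0 := by
      by_contra h
      push_neg at h
      have h10 := hspan (1, 0) (fun i => by rw [h i]; simp [pdot])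
      simp at h10
    obtain ⟨j0, hj0⟩ := hjex
    -- candidate set
    set S : Finset (ℚ × ℚ) :=
      Finset.image (fun z : Fin D × Bool => if z.2 then prot (n z.1) else -prot (n z.1))
        Finset.univ with hS
    have hmemS : ∀ (i : Fin D), prot (n i) ∈ S ∧ -prot (n i) ∈ S := by
      intro i
      constructor
      · exact Finset.mem_image.mpr ⟨(i, true), Finset.mem_univ _, rfl⟩
      · exact Finset.mem_image.mpr ⟨(i, false), Finset.mem_univ _, rfl⟩
    have hformS : ∀ x ∈ S, ∃ i, x = prot (n i) ∨ x = -prot (n i) := by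
      intro x hx
      obtain ⟨⟨i, b⟩, _, hz⟩ := Finset.mem_image.mp hx
      cases b
      · exact ⟨i, Or.inr (by simpa using hz.symm)⟩
      · exact ⟨i, Or.inl (by simpa using hz.symm)⟩
    have hcr1 : ∀ a b : ℚ × ℚ, pcross (prot a) b = -pdot a b := by
      intro a b; simp [pcross, prot, pdot]; ring
    have hcr2 : ∀ a b : ℚ × ℚ, pcross (-prot a) b = pdot a b := by
      intro a b; simp [pcross, prot, pdot]; ring
    set Cp := S.filter (fun x => 0 < pcross x p) with hCp
    set Cm := S.filter (fun x => pcross x p < 0) with hCm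
    have hCpne : Cp.Nonempty := by
      refine ⟨-prot (n j0), Finset.mem_filter.mpr ⟨(hmemS j0).2, ?_⟩⟩
      rw [hcr2]
      exact hpos j0 hj0
    have hCmne : Cm.Nonempty := by
      refine ⟨prot (n j0), Finset.mem_filter.mpr ⟨(hmemS j0).1, ?_⟩⟩
      rw [hcr1]
      simpa using hpos j0 hj0
    set key : ℚ × ℚ → ℚ := fun x => pdot x p / pcross x p with hkey
    obtain ⟨q, hqC, hqmax⟩ := Finset.exists_max_image Cp key hCpne
    obtain ⟨r, hrC, hrmin⟩ := Finset.exists_min_image Cm key hCmne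
    have hqS := (Finset.mem_filter.mp hqC).1
    have hqp : 0 < pcross q p := (Finset.mem_filter.mp hqC).2
    have hrS := (Finset.mem_filter.mp hrC).1
    have hrp : pcross r p < 0 := (Finset.mem_filter.mp hrC).2
    have hqne : q ≠ 0 := by
      intro h; rw [h] at hqp; simp [pcross] at hqp
    have hrne : r ≠ 0 := by
      intro h; rw [h] at hrp; simp [pcross] at hrp
    -- the max property: everything in Cp is counterclockwise from q... 0 ≤ pcross x q
    have hqcr : ∀ x ∈ Cp, 0 ≤ pcross x q := by
      intro x hx
      have hxp : 0 < pcross x p := (Finset.mem_filter.mp hx).2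
      have hk := hqmax x hx
      rw [hkey] at hk
      simp only at hk
      rw [div_le_div_iff₀ hxp hqp] at hk
      have hid : pcross x q * pdot p p = pcross x p * pdot q p - pcross q p * pdot x p := by
        simp [pcross, pdot]; ring
      nlinarith
    have hrcr : ∀ x ∈ Cm, 0 ≤ pcross r x := by
      intro x hx
      have hxp : pcross x p < 0 := (Finset.mem_filter.mp hx).2
      have hk := hrmin x hx
      have e1 : key r * pcross r p = pdot r p := by
        rw [hkey]; exact div_mul_cancel₀ _ (ne_of_lt hrp)
      have e2 : key x * pcross x p = pdot x p := by
        rw [hkey]; exact div_mul_cancel₀ _ (ne_of_lt hxp)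
      have hid : pcross r x * pdot p p = pcross r p * pdot x p - pcross x p * pdot r p := by
        simp [pcross, pdot]; ring
      have hprod : 0 < pcross r p * pcross x p := mul_pos_of_neg_of_neg hrp hxp
      have hmain : 0 ≤ pcross r x * pdot p p := by
        have h2 : pcross r x * pdot p p = (pcross r p * pcross x p) * (key x - key r) := by
          rw [hid, ← e1, ← e2]; ring
        rw [h2]
        exact mul_nonneg (le_of_lt hprod) (by linarith)
      by_contra hcon
      push_neg at hcon
      nlinarith
    -- feasibility of q
    have hqfeas : ∀ i, 0 ≤ pdot (n i) q := by
      intro i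
      by_cases hni : n i = 0
      · simp [hni, pdot]
      · by_contra h
        push_neg at h
        have hsC : -prot (n i) ∈ Cp := by
          refine Finset.mem_filter.mpr ⟨(hmemS i).2, ?_⟩
          rw [hcr2]
          exact hpos i hni
        have := hqcr _ hsC
        rw [hcr2] at this
        linarith
    have hrfeas : ∀ i, 0 ≤ pdot (n i) r := by
      intro i
      by_cases hni : n i = 0
      · simp [hni, pdot]
      · by_contra h
        push_neg at h
        have hsC : prot (n i) ∈ Cm := by
          refine Finset.mem_filter.mpr ⟨(hmemS i).1, ?_⟩
          rw [hcr1]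
          simpa using hpos i hni
        have := hrcr _ hsC
        have hcr3 : pcross r (prot (n i)) = -pcross (prot (n i)) r := by
          simp [pcross]; ring
        rw [hcr3, hcr1] at this
        linarith
    refine ⟨q, r, hformS q hqS, hformS r hrS, hqne, hrne, hqfeas, hrfeas, ?_⟩
    by_cases hc0 : pcross q r = 0
    · -- q parallel to r: contradiction
      exfalso
      have hex : ∃ lam : ℚ, q = lam • r := by
        by_cases h1 : r.1 ≠ 0
        · refine ⟨q.1 / r.1, Prod.ext (by rw [Prod.smul_fst, smul_eq_mul, div_mul_cancel₀ _ h1]) ?_⟩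
          simp [pcross] at hc0
          rw [Prod.smul_snd, smul_eq_mul]; field_simp
          linarith [hc0]
        · push_neg at h1
          have h2 : r.2 ≠ 0 := by
            intro h2; exact hrne (Prod.ext h1 h2)
          refine ⟨q.2 / r.2, Prod.ext ?_ (by rw [Prod.smul_snd, smul_eq_mul, div_mul_cancel₀ _ h2])⟩
          simp [pcross, h1] at hc0
          rcases hc0 with h | h
          · simp [h, h1]
          · exact absurd h h2
      obtain ⟨lam, hlam⟩ := hex
      have hclin : pcross q p = lam * pcross r p := by
        rw [hlam]; simp [pcross]; ring
      have hlamneg : lam < 0 := by nlinarith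
      have hr0 : ∀ i, pdot (n i) r = 0 := by
        intro i
        have hdlin : pdot (n i) q = lam * pdot (n i) r := by
          rw [hlam]; simp [pdot]; ring
        have h1 := hqfeas i
        have h2 := hrfeas i
        nlinarith
      exact hrne (hspan r hr0)
    · have hidv1 : pcross q r * p.1 = pcross p r * q.1 + pcross q p * r.1 := by
        simp [pcross]; ring
      have hidv2 : pcross q r * p.2 = pcross p r * q.2 + pcross q p * r.2 := by
        simp [pcross]; ring
      rcases lt_or_gt_of_ne hc0 with hneg | hposqr
      · -- decomposition has negative coefficients: contradiction with pointedness
        exfalso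
        set l := pcross p r / pcross q r with hl
        set l' := pcross q p / pcross q r with hl'
        have hpr : 0 < pcross p r := by
          have : pcross p r = -pcross r p := by simp [pcross]; ring
          rw [this]; linarith
        have hlneg : l < 0 := div_neg_of_pos_of_neg hpr hneg
        have hl'neg : l' < 0 := div_neg_of_pos_of_neg hqp hneg
        have hzero : ∀ i, pdot (n i) p = 0 := by
          intro i
          have heq : pdot (n i) p * pcross q r =
              pcross p r * pdot (n i) q + pcross q p * pdot (n i) r := by
            simp only [pdot]
            linear_combination (n i).1 * hidv1 + (n i).2 * hidv2
          have h1 : 0 ≤ pcross p r * pdot (n i) q + pcross q p * pdot (n i) r :=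
            add_nonneg (mul_nonneg hpr.le (hqfeas i)) (mul_nonneg hqp.le (hrfeas i))
          have h2 : pdot (n i) p ≤ 0 := by nlinarith [hfeas i]
          exact le_antisymm h2 (hfeas i)
        exact hp (hspan p hzero)
      · set l := pcross p r / pcross q r with hl
        set l' := pcross q p / pcross q r with hl'
        have hpr : 0 < pcross p r := by
          have : pcross p r = -pcross r p := by simp [pcross]; ring
          rw [this]; linarith
        refine ⟨l, l', le_of_lt (div_pos hpr hposqr), le_of_lt (div_pos hqp hposqr), ?_⟩
        ext
        · show p.1 = (l • q + l' • r).1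
          have : (l • q + l' • r).1 = l * q.1 + l' * r.1 := by simp
          rw [this, hl, hl']
          field_simp
          linarith [hidv1]
        · show p.2 = (l • q + l' • r).2
          have : (l • q + l' • r).2 = l * q.2 + l' * r.2 := by simp
          rw [this, hl, hl']
          field_simp
          linarith [hidv2]

/-- A nonzero integer vector `c` in the plane spanned by linearly independent `u', v'`
can be written as a nonnegative rational combination of two nonzero integer vectors of
that plane lying in the orthant `Z_c`, of `1`-norm at most
`(1 + (D+2)·max(1, ‖u'‖∞, ‖v'‖∞))^D`. -/
theorem orthant_decomposition (D : ℕ) (hD : 1 ≤ D) (u' v' : Fin D → ℤ)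
    (hind : LinearIndependent ℚ
      ![(fun i => (u' i : ℚ)), (fun i => (v' i : ℚ))])
    (c : Fin D → ℤ) (hc : c ≠ 0)
    (hcspan : (fun i => (c i : ℚ)) ∈
      Submodule.span ℚ {(fun i => (u' i : ℚ)), (fun i => (v' i : ℚ))}) :
    ∃ (u v : Fin D → ℤ) (l l' : ℚ),
      u ≠ 0 ∧ v ≠ 0 ∧
      (fun i => (u i : ℚ)) ∈
        Submodule.span ℚ {(fun i => (u' i : ℚ)), (fun i => (v' i : ℚ))} ∧
      (fun i => (v i : ℚ)) ∈
        Submodule.span ℚ {(fun i => (u' i : ℚ)), (fun i => (v' i : ℚ))} ∧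
      MemOrthant c u ∧ MemOrthant c v ∧
      0 ≤ l ∧ 0 ≤ l' ∧
      (∀ i, (c i : ℚ) = l * (u i : ℚ) + l' * (v i : ℚ)) ∧
      (∑ i, (u i).natAbs) ≤
        (1 + (D + 2) * max 1 (max (Finset.univ.sup fun i => (u' i).natAbs)
          (Finset.univ.sup fun i => (v' i).natAbs))) ^ D ∧
      (∑ i, (v i).natAbs) ≤
        (1 + (D + 2) * max 1 (max (Finset.univ.sup fun i => (u' i).natAbs)
          (Finset.univ.sup fun i => (v' i).natAbs))) ^ D := by
  -- notation
  set uQ : Fin D → ℚ := fun i => (u' i : ℚ) with huQ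
  set vQ : Fin D → ℚ := fun i => (v' i : ℚ) with hvQ
  -- D ≥ 2
  have hD2 : 2 ≤ D := by
    have h1 := hind.fintype_card_le_finrank
    simpa using h1
  -- linear independence in coefficient form
  have hli : ∀ s t : ℚ, (∀ k, s * u' k + t * v' k = 0) → s = 0 ∧ t = 0 := by
    intro s t hst
    have h := Fintype.linearIndependent_iff.mp hind ![s, t] ?_
    · exact ⟨h 0, h 1⟩
    · rw [Fin.sum_univ_two]
      funext k
      simpa [uQ, vQ, Matrix.cons_val_zero, Matrix.cons_val_one] using hst k
  -- the sign vector
  set e : Fin D → ℚ := fun i => if 0 ≤ c i then 1 else -1 with he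
  have he1 : ∀ i, e i = 1 ∨ e i = -1 := by
    intro i
    by_cases h : 0 ≤ c i
    · left; simp [he, h]
    · right; simp [he, h]
  set n : Fin D → ℚ × ℚ := fun i => (e i * u' i, e i * v' i) with hn
  -- the coefficients of c
  obtain ⟨a, b, hab⟩ := Submodule.mem_span_pair.mp hcspan
  have habk : ∀ k, a * u' k + b * v' k = (c k : ℚ) := by
    intro k
    have := congr_fun hab k
    simpa [uQ, vQ] using this
  set p : ℚ × ℚ := (a, b) with hp'
  have hp : p ≠ 0 := by
    intro h
    have ha : a = 0 := congrArg Prod.fst h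
    have hb : b = 0 := congrArg Prod.snd h
    apply hc
    funext k
    have := habk k
    rw [ha, hb] at this
    simp at this
    exact_mod_cast this.symm
  have hfeasp : ∀ i, 0 ≤ pdot (n i) p := by
    intro i
    have hd : pdot (n i) p = e i * (c i : ℚ) := by
      simp only [pdot, hn, hp']
      rw [← habk i]
      ring
    rw [hd]
    by_cases h : 0 ≤ c i
    · have hei : e i = 1 := by simp [he, h]
      rw [hei, one_mul]
      exact_mod_cast h
    · have hei : e i = -1 := by simp [he, h]
      rw [hei]
      push_neg at h
      have : (c i : ℚ) ≤ 0 := by exact_mod_cast le_of_lt h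
      nlinarith
  have hspanp : ∀ x : ℚ × ℚ, (∀ i, pdot (n i) x = 0) → x = 0 := by
    intro x hx
    have hx' : ∀ k, x.1 * u' k + x.2 * v' k = 0 := by
      intro k
      have := hx k
      simp only [pdot, hn] at this
      rcases he1 k with h | h <;> rw [h] at this <;> nlinarith
    obtain ⟨h1, h2⟩ := hli x.1 x.2 hx'
    exact Prod.ext h1 h2
  obtain ⟨q, r, hqform, hrform, hqne, hrne, hqfeas, hrfeas, l, l', hl, hl', hdec⟩ :=
    geom n p hp hfeasp hspanp
  -- the norm bound constant
  set M : ℕ := max 1 (max (Finset.univ.sup fun i => (u' i).natAbs)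
      (Finset.univ.sup fun i => (v' i).natAbs)) with hM
  have hA : (Finset.univ.sup fun i => (u' i).natAbs) ≤ M := by
    rw [hM]; exact le_max_of_le_right (le_max_left _ _)
  have hB : (Finset.univ.sup fun i => (v' i).natAbs) ≤ M := by
    rw [hM]; exact le_max_of_le_right (le_max_right _ _)
  have hMu : ∀ k, (u' k).natAbs ≤ M := fun k =>
    le_trans (Finset.le_sup (f := fun i => (u' i).natAbs) (Finset.mem_univ k)) hA
  have hMv : ∀ k, (v' k).natAbs ≤ M := fun k =>
    le_trans (Finset.le_sup (f := fun i => (v' i).natAbs) (Finset.mem_univ k)) hB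
  have hM1 : 1 ≤ M := le_max_left _ _
  -- builder
  have build : ∀ q : ℚ × ℚ, (∃ i, q = prot (n i) ∨ q = -prot (n i)) → q ≠ 0 →
      (∀ k, 0 ≤ pdot (n k) q) →
      ∃ w : Fin D → ℤ,
        (∀ k, (w k : ℚ) = q.1 * u' k + q.2 * v' k) ∧
        w ≠ 0 ∧
        ((fun k => (w k : ℚ)) ∈ Submodule.span ℚ {uQ, vQ}) ∧
        MemOrthant c w ∧
        (∑ k, (w k).natAbs) ≤ 2 * D * M ^ 2 := by
    intro q hform hqne hqfeas
    obtain ⟨i, hform⟩ := hform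
    have hrep : ∃ w : Fin D → ℤ, ∀ k, (w k : ℚ) = q.1 * u' k + q.2 * v' k ∧
        (w k).natAbs = (u' i * v' k - v' i * u' k).natAbs := by
      have hei : ∀ (τ : ℤ), ((τ : ℚ) = e i) → (q = prot (n i) ∨ q = -prot (n i)) →
          True := fun _ _ _ => trivial
      rcases hform with h | h
      · -- q = prot (n i) = (- e i * v' i, e i * u' i)
        by_cases hci : 0 ≤ c i
        · refine ⟨fun k => u' i * v' k - v' i * u' k, fun k => ⟨?_, rfl⟩⟩
          have hei : e i = 1 := by simp [he, hci]
          rw [h]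
          simp [prot, hn, hei]
          push_cast
          ring
        · refine ⟨fun k => -(u' i * v' k - v' i * u' k), fun k => ⟨?_, by rw [Int.natAbs_neg]⟩⟩
          have hei : e i = -1 := by simp [he, hci]
          rw [h]
          simp [prot, hn, hei]
          push_cast
          ring
      · by_cases hci : 0 ≤ c i
        · refine ⟨fun k => -(u' i * v' k - v' i * u' k), fun k => ⟨?_, by rw [Int.natAbs_neg]⟩⟩
          have hei : e i = 1 := by simp [he, hci]
          rw [h]
          simp [prot, hn, hei]
          push_cast
          ring
        · refine ⟨fun k => u' i * v' k - v' i * u' k, fun k => ⟨?_, rfl⟩⟩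
          have hei : e i = -1 := by simp [he, hci]
          rw [h]
          simp [prot, hn, hei]
          push_cast
          ring
    obtain ⟨w, hw⟩ := hrep
    have hwrep : ∀ k, (w k : ℚ) = q.1 * u' k + q.2 * v' k := fun k => (hw k).1
    refine ⟨w, hwrep, ?_, ?_, ?_, ?_⟩
    · -- nonzero
      intro h
      apply hqne
      have h0 : ∀ k, q.1 * u' k + q.2 * v' k = 0 := by
        intro k
        rw [← hwrep k, h]
        simp
      obtain ⟨h1, h2⟩ := hli q.1 q.2 h0
      exact Prod.ext h1 h2
    · -- span
      apply Submodule.mem_span_pair.mpr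
      exact ⟨q.1, q.2, by funext k; simp [uQ, vQ, hwrep k]⟩
    · -- orthant
      intro k
      have hd : pdot (n k) q = e k * (w k : ℚ) := by
        simp only [pdot, hn]
        rw [hwrep k]
        ring
      have h0 := hqfeas k
      rw [hd] at h0
      constructor
      · intro hck
        have hek : e k = 1 := by simp [he, hck]
        rw [hek, one_mul] at h0
        exact_mod_cast h0
      · intro hck
        have hek : e k = -1 := by simp [he, not_le.mpr hck]
        rw [hek] at h0
        have : (w k : ℚ) ≤ 0 := by linarith
        exact_mod_cast this
    · -- norm
      have hbk : ∀ k, (w k).natAbs ≤ 2 * M ^ 2 := by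
        intro k
        rw [(hw k).2]
        calc (u' i * v' k - v' i * u' k).natAbs
            ≤ (u' i * v' k).natAbs + (v' i * u' k).natAbs := Int.natAbs_sub_le _ _
          _ = (u' i).natAbs * (v' k).natAbs + (v' i).natAbs * (u' k).natAbs := by
              rw [Int.natAbs_mul, Int.natAbs_mul]
          _ ≤ M * M + M * M := by
              exact Nat.add_le_add (Nat.mul_le_mul (hMu i) (hMv k)) (Nat.mul_le_mul (hMv i) (hMu k))
          _ = 2 * M ^ 2 := by ring
      calc (∑ k, (w k).natAbs) ≤ ∑ _k : Fin D, 2 * M ^ 2 := Finset.sum_le_sum fun k _ => hbk k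
        _ = D * (2 * M ^ 2) := by rw [Finset.sum_const, Finset.card_univ, Fintype.card_fin]; ring
        _ = 2 * D * M ^ 2 := by ring
  obtain ⟨u, hurep, hune, huspan, huorth, hubd⟩ := build q hqform hqne hqfeas
  obtain ⟨v, hvrep, hvne, hvspan, hvorth, hvbd⟩ := build r hrform hrne hrfeas
  have hfinal : 2 * D * M ^ 2 ≤ (1 + (D + 2) * M) ^ D := by
    calc 2 * D * M ^ 2 ≤ (D + 2) ^ 2 * M ^ 2 := by
          apply Nat.mul_le_mul_right
          nlinarith
      _ = ((D + 2) * M) ^ 2 := by ring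
      _ ≤ (1 + (D + 2) * M) ^ 2 := Nat.pow_le_pow_left (Nat.le_add_left _ _) 2
      _ ≤ (1 + (D + 2) * M) ^ D := Nat.pow_le_pow_right (Nat.le_add_right _ _) hD2
  refine ⟨u, v, l, l', hune, hvne, huspan, hvspan, huorth, hvorth, hl, hl', ?_, ?_, ?_⟩
  · intro k
    have hp1 : a = l * q.1 + l' * r.1 := by
      have := congrArg Prod.fst hdec
      simpa using this
    have hp2 : b = l * q.2 + l' * r.2 := by
      have := congrArg Prod.snd hdec
      simpa using this
    rw [← habk k, hurep k, hvrep k, hp1, hp2]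
    ring
  · exact le_trans hubd hfinal
  · exact le_trans hvbd hfinal
end

section
/- Let G = (Q, T) be a D-VASS, let i, j ∈ {1, …, D} with i ≠ j, let B ≥ 1 be an integer, and let p⁰(c⁰) → p¹(c¹) → ⋯ → p^L(c^L) be a path in G (locations in ℤ^D) such that 0 ≤ c^g(i) < B for every g ∈ {0, …, L}. If |c^L(j) − c⁰(j)| > |Q|·(B+1)·‖T‖, then there exist indices 0 ≤ s < t ≤ L with p^s = p^t, c^s(i) = c^t(i) and c^s(j) ≠ c^t(j); consequently the path contains a circular sub-path whose displacement is zero in coordinate i and nonzero in coordinate j. -/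
/-- An edge (transition) of a `D`-dimensional VASS over state space `Q`:
source state, displacement label in `ℤ^D`, target state. -/
abbrev Edge (D : ℕ) (Q : Type) := Q × (Fin D → ℤ) × Q

/-- A `D`-dimensional vector addition system with states over state space `Q`. -/
structure VASS (D : ℕ) (Q : Type) where
  T : Finset (Edge D Q)

/-- `IsPath G p q π` : `π` is a sequence of consecutive transitions of `G` from `p` to `q`. -/
def IsPath {D : ℕ} {Q : Type} (G : VASS D Q) : Q → Q → List (Edge D Q) → Prop
  | p, q, [] => p = q
  | p, q, e :: π => e ∈ G.T ∧ e.1 = p ∧ IsPath G e.2.2 q π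

/-- The displacement of a path: the sum of its labels. -/
def disp {D : ℕ} {Q : Type} (π : List (Edge D Q)) : Fin D → ℤ :=
  fun i => (π.map fun e => e.2.1 i).sum

/-- `‖T‖`: the maximal `∞`-norm of a transition label of `G`. -/
def normT {D : ℕ} {Q : Type} (G : VASS D Q) : ℕ :=
  G.T.sup fun e => Finset.univ.sup fun i => (e.2.1 i).natAbs

/-- The state visited after `g` steps of the path `π` started at state `p`. -/
def stateAt {D : ℕ} {Q : Type} (p : Q) (π : List (Edge D Q)) (g : ℕ) : Q :=
  (p :: π.map fun e => e.2.2).getD g p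

section PigeonholeAux

variable {D : ℕ} {Q : Type}

lemma disp_append (a b : List (Edge D Q)) (x : Fin D) :
    disp (a ++ b) x = disp a x + disp b x := by
  simp [disp]

lemma stateAt_zero (p : Q) (π : List (Edge D Q)) : stateAt p π 0 = p := rfl

lemma stateAt_cons_succ (p : Q) (e : Edge D Q) (π : List (Edge D Q)) (g : ℕ)
    (h : g ≤ π.length) : stateAt p (e :: π) (g + 1) = stateAt e.2.2 π g := by
  unfold stateAt
  rw [List.getD_cons_succ, List.map_cons]
  rw [List.getD_eq_getElem _ _ (by simpa using Nat.lt_succ_of_le h),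
      List.getD_eq_getElem _ _ (by simpa using Nat.lt_succ_of_le h)]

lemma seg {G : VASS D Q} : ∀ (π : List (Edge D Q)) (p q : Q), IsPath G p q π →
    ∀ s t : ℕ, s ≤ t → t ≤ π.length →
    IsPath G (stateAt p π s) (stateAt p π t) ((π.drop s).take (t - s))
  | [], p, q, hπ, s, t, hst, ht => by
    simp at ht
    subst ht
    interval_cases s
    simpa [stateAt_zero, IsPath] using hπ
  | e :: π, p, q, hπ, 0, 0, hst, ht => by
    simp [stateAt_zero, IsPath]
  | e :: π, p, q, hπ, 0, t + 1, hst, ht => by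
    obtain ⟨heT, he1, hrest⟩ := hπ
    simp only [List.length_cons, Nat.add_le_add_iff_right] at ht
    rw [stateAt_cons_succ _ _ _ _ ht, List.drop_zero, Nat.sub_zero, List.take_succ_cons,
      stateAt_zero]
    exact ⟨heT, he1, by
      have := seg π e.2.2 q hrest 0 t (Nat.zero_le _) ht
      simpa [stateAt_zero] using this⟩
  | e :: π, p, q, hπ, s + 1, t + 1, hst, ht => by
    obtain ⟨heT, he1, hrest⟩ := hπ
    simp only [List.length_cons, Nat.add_le_add_iff_right] at ht
    rw [stateAt_cons_succ _ _ _ _ (le_trans (by omega) ht), stateAt_cons_succ _ _ _ _ ht,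
      List.drop_succ_cons, Nat.succ_sub_succ]
    exact seg π e.2.2 q hrest s t (by omega) ht

lemma mem_T {G : VASS D Q} : ∀ (π : List (Edge D Q)) (p q : Q), IsPath G p q π →
    ∀ e ∈ π, e ∈ G.T
  | [], p, q, hπ => by simp
  | e :: π, p, q, hπ => by
    obtain ⟨heT, he1, hrest⟩ := hπ
    intro f hf
    rcases List.mem_cons.1 hf with h | h
    · exact h ▸ heT
    · exact mem_T π e.2.2 q hrest f h

lemma label_le {G : VASS D Q} {e : Edge D Q} (he : e ∈ G.T) (x : Fin D) :
    |e.2.1 x| ≤ (normT G : ℤ) := by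
  rw [Int.abs_eq_natAbs]
  exact_mod_cast le_trans (Finset.le_sup (Finset.mem_univ x))
    (Finset.le_sup (f := fun e : Edge D Q => Finset.univ.sup fun i => (e.2.1 i).natAbs) he)

lemma crossing (L N M : ℕ) (f : ℕ → ℤ)
    (hstep : ∀ g, g < L → |f (g + 1) - f g| ≤ (N : ℤ))
    (hfar : (M : ℤ) * N < f L - f 0) :
    ∀ k : ℕ, ∃ g : ℕ, k ≤ M →
      g ≤ L ∧ f 0 + k * N < f g ∧ f g ≤ f 0 + k * N + N := by
  intro k
  by_cases hk : k ≤ M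
  swap
  · exact ⟨0, fun h => absurd h hk⟩
  have hkM : ((k : ℤ)) * N ≤ (M : ℤ) * N :=
    mul_le_mul_of_nonneg_right (by exact_mod_cast hk) (by positivity)
  have hL : f 0 + (k : ℤ) * N < f L := by linarith
  classical
  have hex : ∃ n, f 0 + (k : ℤ) * N < f n := ⟨L, hL⟩
  refine ⟨Nat.find hex, fun _ => ⟨Nat.find_le (h := hex) hL, Nat.find_spec hex, ?_⟩⟩
  have h0 : 0 < Nat.find hex := by
    rcases Nat.eq_zero_or_pos (Nat.find hex) with h | h
    · exfalso
      have hs := Nat.find_spec hex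
      rw [h] at hs
      have : (0 : ℤ) ≤ (k : ℤ) * N := by positivity
      linarith
    · exact h
  obtain ⟨m, hm⟩ := Nat.exists_eq_succ_of_ne_zero h0.ne'
  have hmin : ¬(f 0 + (k : ℤ) * N < f m) := Nat.find_min hex (by omega)
  have hmL : m < L := by
    have := Nat.find_le (h := hex) hL
    omega
  have habs := (abs_le.1 (hstep m hmL)).2
  push_neg at hmin
  rw [hm]
  linarith

lemma crossing_distinct (L N M : ℕ) (f : ℕ → ℤ)
    (hstep : ∀ g, g < L → |f (g + 1) - f g| ≤ (N : ℤ))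
    (hfar : (M : ℤ) * N < f L - f 0) :
    ∃ g : ℕ → ℕ, (∀ k, k ≤ M → g k ≤ L) ∧
      (∀ k k', k ≤ M → k' ≤ M → k < k' → f (g k) < f (g k')) := by
  choose g hg using crossing L N M f hstep hfar
  refine ⟨g, fun k hk => (hg k hk).1, fun k k' hk hk' hkk' => ?_⟩
  have h1 := (hg k hk).2.2
  have h2 := (hg k' hk').2.1
  have hc : ((k : ℤ)) * N + N ≤ (k' : ℤ) * N := by
    have hk1 : ((k : ℤ)) + 1 ≤ (k' : ℤ) := by exact_mod_cast hkk'
    nlinarith [Int.ofNat_nonneg N]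
  linarith

lemma assemble {G : VASS D Q} {p q : Q} {π : List (Edge D Q)} (hπ : IsPath G p q π)
    (i j : Fin D) (s t : ℕ) (hst : s < t) (ht : t ≤ π.length)
    (hstate : stateAt p π s = stateAt p π t)
    (hi : disp (π.take s) i = disp (π.take t) i)
    (hj : disp (π.take s) j ≠ disp (π.take t) j) :
    ∃ s t : ℕ, s < t ∧ t ≤ π.length ∧
      stateAt p π s = stateAt p π t ∧
      disp (π.take s) i = disp (π.take t) i ∧
      disp (π.take s) j ≠ disp (π.take t) j ∧
      IsPath G (stateAt p π s) (stateAt p π s) ((π.drop s).take (t - s)) ∧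
      disp ((π.drop s).take (t - s)) i = 0 ∧
      disp ((π.drop s).take (t - s)) j ≠ 0 := by
  have h1 : π.take t = π.take s ++ (π.drop s).take (t - s) := by
    conv_lhs => rw [show t = s + (t - s) by omega]
    rw [List.take_add]
  refine ⟨s, t, hst, ht, hstate, hi, hj, ?_, ?_, ?_⟩
  · have h2 := seg π p q hπ s t hst.le ht
    rwa [← hstate] at h2
  · have h2 := hi
    rw [h1, disp_append] at h2
    linarith
  · intro h0
    apply hj
    rw [h1, disp_append, h0, add_zero]


end PigeonholeAux

/-- If along a path the `i`-th coordinate stays in `[0, B)` while the `j`-th coordinate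
changes by more than `|Q|·(B+1)·‖T‖`, then by the pigeonhole principle two intermediate
configurations share the same state and the same `i`-th coordinate but differ in the
`j`-th coordinate; consequently the path contains a circular sub-path whose displacement
is zero in coordinate `i` and nonzero in coordinate `j`. -/
theorem pigeonhole_cycle (D : ℕ) (Q : Type) [Fintype Q] (G : VASS D Q)
    (i j : Fin D) (hij : i ≠ j) (B : ℕ) (hB : 1 ≤ B)
    (p q : Q) (π : List (Edge D Q)) (hπ : IsPath G p q π)
    (c0 : Fin D → ℤ)
    (hbound : ∀ g ≤ π.length,
      0 ≤ c0 i + disp (π.take g) i ∧ c0 i + disp (π.take g) i < (B : ℤ))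
    (hfar : Fintype.card Q * (B + 1) * normT G < (disp π j).natAbs) :
    ∃ s t : ℕ, s < t ∧ t ≤ π.length ∧
      stateAt p π s = stateAt p π t ∧
      disp (π.take s) i = disp (π.take t) i ∧
      disp (π.take s) j ≠ disp (π.take t) j ∧
      IsPath G (stateAt p π s) (stateAt p π s) ((π.drop s).take (t - s)) ∧
      disp ((π.drop s).take (t - s)) i = 0 ∧
      disp ((π.drop s).take (t - s)) j ≠ 0 := by
    classical
  set L := π.length with hL
  set N := normT G with hN
  set M := Fintype.card Q * (B + 1) with hM
  have hf0 : disp (π.take 0) j = 0 := by simp [disp]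
  have hfL : disp (π.take L) j = disp π j := by rw [hL, List.take_length]
  have hstep : ∀ g, g < L →
      |disp (π.take (g + 1)) j - disp (π.take g) j| ≤ (N : ℤ) := by
    intro g hg
    have hT : π[g] ∈ G.T := mem_T π p q hπ _ (List.getElem_mem hg)
    have hsucc : π.take (g + 1) = π.take g ++ [π[g]] := by
      rw [List.take_succ, List.getElem?_eq_getElem hg]
      rfl
    rw [hsucc, disp_append]
    simpa [disp] using label_le hT j
  have hfarZ : (M : ℤ) * N < |disp π j| := by
    rw [Int.abs_eq_natAbs]
    exact_mod_cast hfar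
  -- obtain times with pairwise distinct j-displacements
  obtain ⟨g, hgL, hdist⟩ : ∃ g : ℕ → ℕ, (∀ k, k ≤ M → g k ≤ L) ∧
      (∀ k k', k ≤ M → k' ≤ M → k < k' →
        disp (π.take (g k)) j ≠ disp (π.take (g k')) j) := by
    rcases le_or_gt 0 (disp π j) with hpos | hneg
    · obtain ⟨g, h1, h2⟩ := crossing_distinct L N M (fun n => disp (π.take n) j) hstep
        (by
          rw [abs_of_nonneg hpos] at hfarZ
          show (M : ℤ) * N < disp (π.take L) j - disp (π.take 0) j
          rw [hfL, hf0, sub_zero]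
          exact hfarZ)
      exact ⟨g, h1, fun k k' hk hk' hkk' => (h2 k k' hk hk' hkk').ne⟩
    · obtain ⟨g, h1, h2⟩ := crossing_distinct L N M (fun n => -disp (π.take n) j)
        (by
          intro g hg
          rw [show -disp (π.take (g + 1)) j - -disp (π.take g) j =
            -(disp (π.take (g + 1)) j - disp (π.take g) j) by ring, abs_neg]
          exact hstep g hg)
        (by rw [abs_of_neg hneg] at hfarZ; simp only [hf0, hfL, neg_zero, sub_zero]; linarith)
      exact ⟨g, h1, fun k k' hk hk' hkk' => by
        have := (h2 k k' hk hk' hkk').ne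
        intro h
        exact this (by simp [h])⟩
  -- pigeonhole on (state, i-coordinate)
  have hcard : ((Finset.univ : Finset Q) ×ˢ Finset.Ico (0 : ℤ) (B : ℤ)).card <
      (Finset.range (M + 1)).card := by
    rw [Finset.card_product, Finset.card_range, Finset.card_univ, Int.card_Ico]
    simp only [sub_zero, Int.toNat_natCast]
    calc Fintype.card Q * B ≤ Fintype.card Q * (B + 1) :=
          Nat.mul_le_mul_left _ (by omega)
      _ < M + 1 := Nat.lt_succ_self _
  obtain ⟨k, hk, k', hk', hkne, hFeq⟩ :=
    Finset.exists_ne_map_eq_of_card_lt_of_maps_to (s := Finset.range (M + 1))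
      (t := (Finset.univ : Finset Q) ×ˢ Finset.Ico (0 : ℤ) (B : ℤ))
      (f := fun k => (stateAt p π (g k), c0 i + disp (π.take (g k)) i)) hcard
      (by
        intro k hk
        rw [Finset.mem_coe, Finset.mem_product]
        exact ⟨Finset.mem_univ _, Finset.mem_Ico.2
          (hbound (g k) (hgL k (Nat.lt_succ_iff.1 (Finset.mem_range.1 hk))))⟩)
  rw [Finset.mem_range, Nat.lt_succ_iff] at hk hk'
  have hstateEq : stateAt p π (g k) = stateAt p π (g k') := congrArg Prod.fst hFeq
  have hiEq : disp (π.take (g k)) i = disp (π.take (g k')) i := by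
    have := congrArg Prod.snd hFeq
    simpa using this
  have hjNe : disp (π.take (g k)) j ≠ disp (π.take (g k')) j := by
    rcases hkne.lt_or_gt with h | h
    · exact hdist k k' hk hk' h
    · exact (hdist k' k hk' hk h).symm
  have hgne : g k ≠ g k' := fun h => hjNe (by rw [h])
  rcases hgne.lt_or_gt with h | h
  · exact assemble hπ i j (g k) (g k') h (hgL k' hk') hstateEq hiEq hjNe
  · exact assemble hπ i j (g k') (g k) h (hgL k hk) hstateEq.symm hiEq.symm hjNe.symm
end
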